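/- The adjoint projection I_K^{d^k} is quasi-optimal in the broken HΛ^k norm: there is a constant C depending only on k, n and the shape regularity of the cube K such that ‖ω − I_K^{d^k} ω‖_{HΛ^k(K)} ≤ C inf_{η ∈ P_1^-Λ^k(K)} ‖ω − η‖_{HΛ^k(K)} for all ω ∈ HΛ^k(K). -/

import Mathlib

open MvPolynomial Finset MeasureTheory

/-- Strictly increasing `k`-indices in `{1,…,n}`, modelled as `k`-element subsets of `Fin n`. -/
abbrev Idx (n k : ℕ) := {s : Finset (Fin n) // s.card = k}

/-- A differential `k`-form with polynomial coefficients on `ℝⁿ`: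
one polynomial coefficient for each increasing `k`-index. -/
abbrev Form (n k : ℕ) := Idx n k → MvPolynomial (Fin n) ℝ

/-- The sign `(-1)^{#\{j ∈ s : j < i\}}`. -/
noncomputable def sgn {n : ℕ} (s : Finset (Fin n)) (i : Fin n) : ℝ :=
  (-1) ^ (s.filter (· < i)).card

def eraseIdx {n k : ℕ} (s : Idx n (k+1)) {i : Fin n} (hi : i ∈ s.1) : Idx n k :=
  ⟨s.1.erase i, by simp [Finset.card_erase_of_mem hi, s.2]⟩

def insertIdx {n k : ℕ} (s : Idx n k) {i : Fin n} (hi : i ∉ s.1) : Idx n (k+1) :=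
  ⟨insert i s.1, by simp [Finset.card_insert_of_notMem hi, s.2]⟩

/-- The exterior derivative `d^k`. -/
noncomputable def extd (n k : ℕ) : Form n k →ₗ[ℝ] Form n (k+1) where
  toFun ω := fun s => ∑ i ∈ s.1.attach, sgn s.1 i.1 • pderiv i.1 (ω (eraseIdx s i.2))
  map_add' ω η := by
    funext s
    simp [Finset.sum_add_distrib, smul_add]
  map_smul' c ω := by
    funext s
    simp only [Pi.smul_apply, RingHom.id_apply]
    rw [Finset.smul_sum]
    exact Finset.sum_congr rfl (fun i _ => by rw [(pderiv i.1).map_smul, smul_comm])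

/-- The Koszul operator `κ` (contraction with the position vector field). -/
noncomputable def koszul (n k : ℕ) : Form n (k+1) →ₗ[ℝ] Form n k where
  toFun ω := fun s =>
    ∑ i ∈ (s.1ᶜ).attach, sgn s.1 i.1 • (X i.1 * ω (insertIdx s (Finset.mem_compl.mp i.2)))
  map_add' ω η := by
    funext s
    simp [Finset.sum_add_distrib, mul_add, smul_add]
  map_smul' c ω := by
    funext s
    simp only [Pi.smul_apply, RingHom.id_apply, mul_smul_comm]
    rw [Finset.smul_sum]
    exact Finset.sum_congr rfl (fun i _ => (smul_comm _ _ _))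

/-- The codifferential `δ_{k+1}` (the formal adjoint of `d^k` on Euclidean `ℝⁿ`,
which coincides with `(-1)^{(k+1)n} ⋆ d^{n-k-1} ⋆`). -/
noncomputable def codiff (n k : ℕ) : Form n (k+1) →ₗ[ℝ] Form n k where
  toFun ω := fun s =>
    -∑ i ∈ (s.1ᶜ).attach, sgn s.1 i.1 • pderiv i.1 (ω (insertIdx s (Finset.mem_compl.mp i.2)))
  map_add' ω η := by
    funext s
    simp [Finset.sum_add_distrib, smul_add]
    ring
  map_smul' c ω := by
    funext s
    simp only [Pi.smul_apply, RingHom.id_apply, smul_neg, neg_inj]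
    rw [Finset.smul_sum]
    exact Finset.sum_congr rfl (fun i _ => by rw [(pderiv i.1).map_smul, smul_comm])

/-- The operator `κ^δ = ⋆ ∘ κ ∘ ⋆` (exterior multiplication by `Σ xᵢ dxⁱ`, up to sign). -/
noncomputable def kappaDelta (n k : ℕ) : Form n k →ₗ[ℝ] Form n (k+1) where
  toFun ω := fun s => ∑ i ∈ s.1.attach, sgn s.1 i.1 • (X i.1 * ω (eraseIdx s i.2))
  map_add' ω η := by
    funext s
    simp [Finset.sum_add_distrib, mul_add, smul_add]
  map_smul' c ω := by
    funext s
    simp only [Pi.smul_apply, RingHom.id_apply, mul_smul_comm]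
    rw [Finset.smul_sum]
    exact Finset.sum_congr rfl (fun i _ => (smul_comm _ _ _))

/-- Sign of the permutation `(t, tᶜ) ↦ (1,…,n)`, i.e. `⋆ dx^t = starSign t · dx^{tᶜ}`. -/
noncomputable def starSign {n : ℕ} (t : Finset (Fin n)) : ℝ :=
  (-1) ^ (∑ i ∈ t, ((tᶜ).filter (· < i)).card)

/-- The Hodge star operator on `k`-forms on `ℝⁿ`, `k + l = n`. -/
noncomputable def hodge (n k l : ℕ) (h : k + l = n) : Form n k →ₗ[ℝ] Form n l where
  toFun ω := fun s => starSign (s.1ᶜ) •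
    ω ⟨s.1ᶜ, by rw [Finset.card_compl, s.2, Fintype.card_fin]; omega⟩
  map_add' ω η := by funext s; simp [smul_add]
  map_smul' c ω := by funext s; simp only [Pi.smul_apply, RingHom.id_apply]; rw [smul_comm]

/-- The monomial form `x_τ dx^σ`. -/
noncomputable def monForm (n k : ℕ) (τ : Finset (Fin n)) (σ : Idx n k) : Form n k :=
  fun s => if s = σ then ∏ i ∈ τ, X i else 0

/-- `Q_1^-Λ^k = span{ x_τ dx^σ : |σ| = k, 0 ≤ |τ| ≤ n-k, τ ⊆ σᶜ }`. -/
noncomputable def Qm (n k : ℕ) : Submodule ℝ (Form n k) :=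
  Submodule.span ℝ
    {ω | ∃ (τ : Finset (Fin n)) (σ : Idx n k), τ.card ≤ n - k ∧ τ ⊆ (σ.1)ᶜ ∧ ω = monForm n k τ σ}

/-- `Q_1^{*,-}Λ^k = span{ x_τ' dx^σ' : |σ'| = k, 0 ≤ |τ'| ≤ k, τ' ⊆ σ' }`. -/
noncomputable def Qs (n k : ℕ) : Submodule ℝ (Form n k) :=
  Submodule.span ℝ
    {ω | ∃ (τ : Finset (Fin n)) (σ : Idx n k), τ.card ≤ k ∧ τ ⊆ σ.1 ∧ ω = monForm n k τ σ}

/-- `P_0Λ^k`: forms with constant coefficients. -/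
noncomputable def P0 (n k : ℕ) : Submodule ℝ (Form n k) :=
  Submodule.span ℝ {ω | ∃ σ : Idx n k, ω = monForm n k ∅ σ}

/-- The Whitney space `P_1^-Λ^k = P_0Λ^k + κ(P_0Λ^{k+1})`. -/
noncomputable def Pm (n k : ℕ) : Submodule ℝ (Form n k) :=
  P0 n k ⊔ Submodule.map (koszul n k) (P0 n (k+1))

/-- The star Whitney space `P_1^{*,-}Λ^{k+1} = P_0Λ^{k+1} + κ^δ(P_0Λ^k)`. -/
noncomputable def PsS (n k : ℕ) : Submodule ℝ (Form n (k+1)) :=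
  P0 n (k+1) ⊔ Submodule.map (kappaDelta n k) (P0 n k)

/-- `L²` inner product of `k`-forms on the centered box `[-r, r]`. -/
noncomputable def binner (n k : ℕ) (r : Fin n → ℝ) (ω η : Form n k) : ℝ :=
  ∑ s : Idx n k, ∫ x in Set.Icc (fun i => -(r i)) r, eval x (ω s * η s)

/-- `L²` inner product of `k`-forms on the reference cube `T = [-1,1]ⁿ`. -/
noncomputable def finner (n k : ℕ) (ω η : Form n k) : ℝ :=
  binner n k (fun _ => (1 : ℝ)) ω η

/-- The `HΛ^k(K)` norm on the reference cube: `‖μ‖² = ‖μ‖²_{L²Λ^k} + ‖d^k μ‖²_{L²Λ^{k+1}}`. -/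
noncomputable def hnorm (n k : ℕ) (ω : Form n k) : ℝ :=
  Real.sqrt (finner n k ω ω + finner n (k+1) (extd n k ω) (extd n k ω))

/-!
Set `Δ = ω - η` and `ρ = I ω - η ∈ P₁⁻Λᵏ`, so that `ω - I ω = Δ - ρ` and
`⟨dρ, μ⟩ - ⟨ρ, δμ⟩ = ⟨dΔ, μ⟩ - ⟨Δ, δμ⟩` for every `μ ∈ P₁^{*,-}Λ^{k+1}`. Write `ρ = a + κ b` with
constant `a`, `b`. Since `dρ = (k + 1) b` and `δ b = 0`, testing with `μ = b` bounds `‖b‖` by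
`‖Δ‖_{HΛ}`; since `δ κ^δ a = -(n - k) a`, testing with `μ = κ^δ a` then bounds `‖a‖`. On constant
forms `κ` and `κ^δ` are bounded in `L²`, so `‖ρ‖_{HΛ} ≤ C ‖Δ‖_{HΛ}`, and the triangle inequality
gives quasi-optimality with constant `1 + C`.
-/

namespace LinearMap.BilinForm.IsPosSemidef

variable {M : Type*} [AddCommGroup M] [Module ℝ M] {B : LinearMap.BilinForm ℝ M}

lemma abs_apply_le (hB : B.IsPosSemidef) (x y : M) :
    |B x y| ≤ √(B x x) * √(B y y) := by
  rw [← Real.sqrt_mul (hB.isNonneg.nonneg x)]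
  exact Real.abs_le_sqrt (B.apply_sq_le_of_symm hB.isNonneg.nonneg (isSymm_iff.mp hB.isSymm) x y)

lemma sqrt_apply_add_le (hB : B.IsPosSemidef) (x y : M) :
    √(B (x + y) (x + y)) ≤ √(B x x) + √(B y y) := by
  have hxy : B x y ≤ √(B x x) * √(B y y) := (le_abs_self _).trans (hB.abs_apply_le x y)
  have hexp : B (x + y) (x + y) = B x x + 2 * B x y + B y y := by
    simp only [map_add, LinearMap.add_apply, hB.isSymm.eq y x]
    ring
  refine Real.sqrt_le_iff.mpr ⟨by positivity, ?_⟩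
  rw [hexp, add_sq, Real.sq_sqrt (hB.isNonneg.nonneg x), Real.sq_sqrt (hB.isNonneg.nonneg y)]
  linarith

noncomputable def seminorm (hB : B.IsPosSemidef) : Seminorm ℝ M :=
  Seminorm.of (fun x => √(B x x)) hB.sqrt_apply_add_le fun c x => by
    simp only [map_smul, smul_apply, smul_eq_mul, ← mul_assoc]
    rw [Real.sqrt_mul (mul_self_nonneg c), Real.sqrt_mul_self_eq_abs, Real.norm_eq_abs]

end LinearMap.BilinForm.IsPosSemidef

lemma le_of_sq_le_mul {x c : ℝ} (hc : 0 ≤ c) (h : x ^ 2 ≤ x * c) : x ≤ c := by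
  nlinarith

lemma le_of_natCast_add_one_mul_le {x y : ℝ} {k : ℕ} (hx : 0 ≤ x) (h : ((k : ℝ) + 1) * x ≤ y) :
    x ≤ y :=
  (le_mul_of_one_le_left hx (le_add_of_nonneg_left k.cast_nonneg)).trans h

lemma sgn_mul_self {n : ℕ} (s : Finset (Fin n)) (i : Fin n) : sgn s i * sgn s i = 1 := by
  rw [sgn, ← pow_add, ← two_mul, pow_mul, neg_one_sq, one_pow]

lemma abs_sgn {n : ℕ} (s : Finset (Fin n)) (i : Fin n) : |sgn s i| = 1 := by
  simp [sgn, abs_pow]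

lemma sgn_erase {n : ℕ} (s : Finset (Fin n)) (i : Fin n) : sgn (s.erase i) i = sgn s i := by
  unfold sgn
  congr 2
  ext j
  simp only [mem_filter, mem_erase]
  exact ⟨fun h => ⟨h.1.2, h.2⟩, fun h => ⟨⟨h.2.ne, h.1⟩, h.2⟩⟩

lemma sgn_insert {n : ℕ} (s : Finset (Fin n)) (i : Fin n) : sgn (insert i s) i = sgn s i := by
  rw [← sgn_erase, erase_insert_eq_erase, sgn_erase]

noncomputable def constForm (n m : ℕ) : (Idx n m → ℝ) →ₗ[ℝ] Form n m where
  toFun c s := C (c s)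
  map_add' _ _ := by funext s; simp
  map_smul' _ _ := by funext s; simp [smul_eq_C_mul]

@[simp]
lemma constForm_apply {n m : ℕ} (c : Idx n m → ℝ) (s : Idx n m) : constForm n m c s = C (c s) :=
  rfl

lemma monForm_empty {n m : ℕ} (σ : Idx n m) : monForm n m ∅ σ = constForm n m (Pi.single σ 1) := by
  funext s
  by_cases h : s = σ
  · subst h; simp [monForm]
  · simp [monForm, h]

lemma P0_eq_range_constForm (n m : ℕ) : P0 n m = LinearMap.range (constForm n m) := by
  have hgen : {ω | ∃ σ : Idx n m, ω = monForm n m ∅ σ}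
      = constForm n m '' Set.range (Pi.basisFun ℝ (Idx n m)) := by
    ext ω
    simp [monForm_empty, eq_comm]
  rw [P0, hgen, Submodule.span_image, Module.Basis.span_eq, Submodule.map_top]

lemma exists_eq_constForm_add_koszul_of_mem_Pm {n k : ℕ} {ρ : Form n k} (h : ρ ∈ Pm n k) :
    ∃ (a : Idx n k → ℝ) (b : Idx n (k+1) → ℝ),
      ρ = constForm n k a + koszul n k (constForm n (k+1) b) := by
  rw [Pm, P0_eq_range_constForm, P0_eq_range_constForm, Submodule.mem_sup] at h
  obtain ⟨_, ⟨a, rfl⟩, _, ⟨_, ⟨b, rfl⟩, rfl⟩, rfl⟩ := h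
  exact ⟨a, b, rfl⟩

lemma constForm_mem_PsS {n k : ℕ} (b : Idx n (k+1) → ℝ) : constForm n (k+1) b ∈ PsS n k :=
  Submodule.mem_sup_left (by rw [P0_eq_range_constForm]; exact ⟨b, rfl⟩)

lemma kappaDelta_constForm_mem_PsS {n k : ℕ} (a : Idx n k → ℝ) :
    kappaDelta n k (constForm n k a) ∈ PsS n k :=
  Submodule.mem_sup_right (Submodule.mem_map_of_mem (by rw [P0_eq_range_constForm]; exact ⟨a, rfl⟩))

lemma extd_constForm (n m : ℕ) (c : Idx n m → ℝ) : extd n m (constForm n m c) = 0 := by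
  funext s
  simp [extd]

lemma codiff_constForm (n k : ℕ) (c : Idx n (k+1) → ℝ) : codiff n k (constForm n (k+1) c) = 0 := by
  funext s
  simp [codiff]

lemma pderiv_smul_X_mul_C {n : ℕ} (i j : Fin n) (e c : ℝ) :
    pderiv i (e • (X j * C c) : MvPolynomial (Fin n) ℝ) = if j = i then C (e * c) else 0 := by
  by_cases h : j = i
  · subst h; simp [smul_eq_C_mul]
  · simp [pderiv_X_of_ne h, h]

lemma extd_koszul_constForm (n k : ℕ) (b : Idx n (k+1) → ℝ) :
    extd n k (koszul n k (constForm n (k+1) b)) = ((k : ℝ) + 1) • constForm n (k+1) b := by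
  funext s
  have hterm : ∀ i : {x // x ∈ s.1}, sgn s.1 i.1 • pderiv i.1
      (koszul n k (constForm n (k+1) b) (eraseIdx s i.2)) = C (b s) := by
    intro i
    have hi : i.1 ∈ (eraseIdx s i.2).1ᶜ := by simp [eraseIdx]
    have hins : insertIdx (eraseIdx s i.2) (mem_compl.mp hi) = s :=
      Subtype.ext (insert_erase i.2)
    simp only [koszul, LinearMap.coe_mk, AddHom.coe_mk, constForm_apply, map_sum,
      pderiv_smul_X_mul_C]
    rw [sum_eq_single_of_mem ⟨i.1, hi⟩ (mem_attach _ _) fun j _ hj => if_neg (by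
      exact fun h => hj (Subtype.ext h)), if_pos rfl, hins, show sgn (eraseIdx s i.2).1 i.1
      = sgn s.1 i.1 from sgn_erase _ _, smul_eq_C_mul, ← C_mul, ← mul_assoc, sgn_mul_self,
      one_mul]
  simp only [extd, LinearMap.coe_mk, AddHom.coe_mk]
  rw [sum_congr rfl fun i _ => hterm i]
  simp [s.2, smul_eq_C_mul]

lemma codiff_kappaDelta_constForm (n k : ℕ) (a : Idx n k → ℝ) :
    codiff n k (kappaDelta n k (constForm n k a)) = (-((n : ℝ) - k)) • constForm n k a := by
  funext s
  have hterm : ∀ i : {x // x ∈ s.1ᶜ}, sgn s.1 i.1 • pderiv i.1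
      (kappaDelta n k (constForm n k a) (insertIdx s (mem_compl.mp i.2))) = C (a s) := by
    intro i
    have hi : i.1 ∈ (insertIdx s (mem_compl.mp i.2)).1 := mem_insert_self _ _
    have hera : eraseIdx (insertIdx s (mem_compl.mp i.2)) hi = s :=
      Subtype.ext (erase_insert (mem_compl.mp i.2))
    simp only [kappaDelta, LinearMap.coe_mk, AddHom.coe_mk, constForm_apply, map_sum,
      pderiv_smul_X_mul_C]
    rw [sum_eq_single_of_mem ⟨i.1, hi⟩ (mem_attach _ _) fun j _ hj => if_neg (by
      exact fun h => hj (Subtype.ext h)), if_pos rfl, hera, show sgn (insertIdx s _).1 i.1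
      = sgn s.1 i.1 from sgn_insert _ _, smul_eq_C_mul, ← C_mul, ← mul_assoc, sgn_mul_self,
      one_mul]
  have hcard : s.1ᶜ.card + k = n := by
    have := card_compl_add_card s.1
    rwa [s.2, Fintype.card_fin] at this
  simp only [codiff, LinearMap.coe_mk, AddHom.coe_mk]
  rw [sum_congr rfl fun i _ => hterm i]
  simp only [sum_const, card_attach, nsmul_eq_mul, Pi.smul_apply, constForm_apply, smul_eq_C_mul,
    ← hcard]
  push_cast
  rw [add_sub_cancel_right, map_neg, map_natCast]
  ring

abbrev refCube (n : ℕ) : Set (Fin n → ℝ) := Set.Icc (fun _ => -1) (fun _ => 1)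

lemma finner_eq_sum {n m : ℕ} (ω η : Form n m) :
    finner n m ω η = ∑ s, ∫ x in refCube n, eval x (ω s * η s) := rfl

lemma volume_real_refCube (n : ℕ) : volume.real (refCube n) = 2 ^ n := by
  rw [measureReal_def, Real.volume_Icc_pi_toReal fun _ => by norm_num]
  norm_num

lemma abs_le_one_of_mem_refCube {n : ℕ} {x : Fin n → ℝ} (hx : x ∈ refCube n) (i : Fin n) :
    |x i| ≤ 1 :=
  abs_le.mpr ⟨hx.1 i, hx.2 i⟩

lemma finner_add_left {n m : ℕ} (ω η ζ : Form n m) :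
    finner n m (ω + η) ζ = finner n m ω ζ + finner n m η ζ := by
  simp only [finner_eq_sum, ← sum_add_distrib, Pi.add_apply, add_mul, map_add]
  refine sum_congr rfl fun s _ => integral_add ?_ ?_ <;>
    exact (continuous_eval _).integrableOn_Icc

lemma finner_smul_left {n m : ℕ} (c : ℝ) (ω ζ : Form n m) :
    finner n m (c • ω) ζ = c * finner n m ω ζ := by
  simp only [finner_eq_sum, mul_sum, Pi.smul_apply, smul_mul_assoc, smul_eval]
  exact sum_congr rfl fun s _ => integral_const_mul c _

lemma finner_comm {n m : ℕ} (ω η : Form n m) : finner n m ω η = finner n m η ω := by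
  simp only [finner_eq_sum, mul_comm]

lemma finner_self_nonneg {n m : ℕ} (ω : Form n m) : 0 ≤ finner n m ω ω := by
  rw [finner_eq_sum]
  exact sum_nonneg fun s _ => setIntegral_nonneg measurableSet_Icc fun x _ => by
    rw [map_mul]; exact mul_self_nonneg _

noncomputable def l2Form (n m : ℕ) : LinearMap.BilinForm ℝ (Form n m) :=
  LinearMap.mk₂ ℝ (finner n m) finner_add_left finner_smul_left
    (fun ω η ζ => by rw [finner_comm, finner_add_left, finner_comm η, finner_comm ζ])
    (fun c ω η => by rw [finner_comm, finner_smul_left, finner_comm, smul_eq_mul])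

lemma finner_smul_right {n m : ℕ} (c : ℝ) (ω η : Form n m) :
    finner n m ω (c • η) = c * finner n m ω η :=
  (l2Form n m ω).map_smul c η

lemma finner_zero_right {n m : ℕ} (ω : Form n m) : finner n m ω 0 = 0 :=
  (l2Form n m ω).map_zero

lemma finner_sub_left {n m : ℕ} (ω η ζ : Form n m) :
    finner n m (ω - η) ζ = finner n m ω ζ - finner n m η ζ :=
  LinearMap.map_sub₂ (l2Form n m) ω η ζ

lemma l2Form_isPosSemidef (n m : ℕ) : (l2Form n m).IsPosSemidef where
  eq := finner_comm
  nonneg := finner_self_nonneg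

noncomputable def hForm (n k : ℕ) : LinearMap.BilinForm ℝ (Form n k) :=
  l2Form n k + (l2Form n (k+1)).compl₁₂ (extd n k) (extd n k)

lemma hForm_isPosSemidef (n k : ℕ) : (hForm n k).IsPosSemidef :=
  (l2Form_isPosSemidef n k).add
    { eq := fun x y => finner_comm (extd n k x) (extd n k y)
      nonneg := fun x => finner_self_nonneg (extd n k x) }

noncomputable def l2norm (n m : ℕ) : Seminorm ℝ (Form n m) := (l2Form_isPosSemidef n m).seminorm

noncomputable def hSeminorm (n k : ℕ) : Seminorm ℝ (Form n k) := (hForm_isPosSemidef n k).seminorm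

lemma l2norm_apply {n m : ℕ} (ω : Form n m) : l2norm n m ω = √(finner n m ω ω) := rfl

lemma hSeminorm_apply {n k : ℕ} (ω : Form n k) : hSeminorm n k ω = hnorm n k ω := rfl

lemma abs_finner_le {n m : ℕ} (ω η : Form n m) :
    |finner n m ω η| ≤ l2norm n m ω * l2norm n m η :=
  (l2Form_isPosSemidef n m).abs_apply_le ω η

lemma hnorm_eq {n k : ℕ} (ω : Form n k) :
    hnorm n k ω = √(l2norm n k ω ^ 2 + l2norm n (k+1) (extd n k ω) ^ 2) := by
  rw [l2norm_apply, l2norm_apply, Real.sq_sqrt (finner_self_nonneg _),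
    Real.sq_sqrt (finner_self_nonneg _), hnorm]

lemma l2norm_le_hnorm {n k : ℕ} (ω : Form n k) : l2norm n k ω ≤ hnorm n k ω := by
  rw [hnorm_eq]
  exact Real.le_sqrt_of_sq_le (le_add_of_nonneg_right (sq_nonneg _))

lemma l2norm_extd_le_hnorm {n k : ℕ} (ω : Form n k) :
    l2norm n (k+1) (extd n k ω) ≤ hnorm n k ω := by
  rw [hnorm_eq]
  exact Real.le_sqrt_of_sq_le (le_add_of_nonneg_left (sq_nonneg _))

lemma hnorm_le_l2norm_add_l2norm_extd {n k : ℕ} (ω : Form n k) :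
    hnorm n k ω ≤ l2norm n k ω + l2norm n (k+1) (extd n k ω) := by
  rw [hnorm_eq]
  refine Real.sqrt_le_iff.mpr ⟨by positivity, ?_⟩
  nlinarith [apply_nonneg (l2norm n k) ω, apply_nonneg (l2norm n (k+1)) (extd n k ω)]

lemma finner_constForm_self {n m : ℕ} (c : Idx n m → ℝ) :
    finner n m (constForm n m c) (constForm n m c) = 2 ^ n * ∑ s, c s ^ 2 := by
  simp [finner_eq_sum, mul_sum, volume_real_refCube, sq]

lemma sqrt_two_pow_mul_norm_le_l2norm_constForm {n m : ℕ} (c : Idx n m → ℝ) :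
    √(2 ^ n) * ‖c‖ ≤ l2norm n m (constForm n m c) := by
  rw [l2norm_apply, finner_constForm_self, Real.sqrt_mul (by positivity)]
  refine mul_le_mul_of_nonneg_left ((pi_norm_le_iff_of_nonneg (Real.sqrt_nonneg _)).mpr
    fun s => Real.abs_le_sqrt ?_) (Real.sqrt_nonneg _)
  exact single_le_sum (f := fun s => c s ^ 2) (fun _ _ => sq_nonneg _) (mem_univ s)

lemma l2norm_le_of_abs_eval_le {n m : ℕ} {ω : Form n m} {M : ℝ} (hM : 0 ≤ M)
    (h : ∀ s, ∀ x ∈ refCube n, |eval x (ω s)| ≤ M) :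
    l2norm n m ω ≤ √(Fintype.card (Idx n m)) * (√(2 ^ n) * M) := by
  have hcoeff : ∀ s, ∫ x in refCube n, eval x (ω s * ω s) ≤ 2 ^ n * M ^ 2 := fun s => by
    calc ∫ x in refCube n, eval x (ω s * ω s) ≤ ∫ _ in refCube n, M ^ 2 :=
          setIntegral_mono_on (continuous_eval _).integrableOn_Icc
            continuous_const.integrableOn_Icc measurableSet_Icc fun x hx => by
              rw [map_mul, ← sq, ← sq_abs]
              exact pow_le_pow_left₀ (abs_nonneg _) (h s x hx) 2
      _ = 2 ^ n * M ^ 2 := by rw [setIntegral_const, volume_real_refCube, smul_eq_mul]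
  have hfinner : finner n m ω ω ≤ Fintype.card (Idx n m) * (2 ^ n * M ^ 2) := by
    rw [finner_eq_sum]
    exact (sum_le_sum fun s _ => hcoeff s).trans_eq (by simp)
  rw [l2norm_apply, ← Real.sqrt_sq hM, ← Real.sqrt_mul (by positivity), ← Real.sqrt_mul
    (by positivity)]
  exact Real.sqrt_le_sqrt hfinner

lemma abs_sum_sgn_mul_le {n : ℕ} {ι β : Type*} [Fintype β] (A : Finset ι) (t : Finset (Fin n))
    (j : ι → Fin n) {x : Fin n → ℝ} (hx : x ∈ refCube n) (c : β → ℝ) (g : ι → β) :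
    |∑ i ∈ A, sgn t (j i) * (x (j i) * c (g i))| ≤ A.card * ‖c‖ := by
  refine (abs_sum_le_sum_abs _ _).trans ?_
  rw [← nsmul_eq_mul]
  refine sum_le_card_nsmul _ _ _ fun i _ => ?_
  rw [abs_mul, abs_mul, abs_sgn, one_mul, ← one_mul ‖c‖, ← Real.norm_eq_abs (c (g i))]
  exact mul_le_mul (abs_le_one_of_mem_refCube hx _) (norm_le_pi_norm c (g i))
    (norm_nonneg _) zero_le_one

lemma abs_eval_koszul_constForm_le {n k : ℕ} (b : Idx n (k+1) → ℝ) (s : Idx n k)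
    {x : Fin n → ℝ} (hx : x ∈ refCube n) :
    |eval x (koszul n k (constForm n (k+1) b) s)| ≤ n * ‖b‖ := by
  simp only [koszul, LinearMap.coe_mk, AddHom.coe_mk, constForm_apply, map_sum, smul_eval,
    map_mul, eval_X, eval_C]
  refine (abs_sum_sgn_mul_le _ _ _ hx _ _).trans (mul_le_mul_of_nonneg_right ?_ (norm_nonneg _))
  exact_mod_cast (card_attach ..).trans_le ((card_le_univ _).trans_eq (Fintype.card_fin n))

lemma abs_eval_kappaDelta_constForm_le {n k : ℕ} (a : Idx n k → ℝ) (s : Idx n (k+1))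
    {x : Fin n → ℝ} (hx : x ∈ refCube n) :
    |eval x (kappaDelta n k (constForm n k a) s)| ≤ n * ‖a‖ := by
  simp only [kappaDelta, LinearMap.coe_mk, AddHom.coe_mk, constForm_apply, map_sum, smul_eval,
    map_mul, eval_X, eval_C]
  refine (abs_sum_sgn_mul_le _ _ _ hx _ _).trans (mul_le_mul_of_nonneg_right ?_ (norm_nonneg _))
  exact_mod_cast (card_attach ..).trans_le ((card_le_univ _).trans_eq (Fintype.card_fin n))

lemma l2norm_koszul_constForm_le {n k : ℕ} (b : Idx n (k+1) → ℝ) :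
    l2norm n k (koszul n k (constForm n (k+1) b))
      ≤ n * √(Fintype.card (Idx n k)) * l2norm n (k+1) (constForm n (k+1) b) := by
  calc _ ≤ √(Fintype.card (Idx n k)) * (√(2 ^ n) * (n * ‖b‖)) :=
        l2norm_le_of_abs_eval_le (by positivity) fun s _ hx => abs_eval_koszul_constForm_le b s hx
    _ = n * √(Fintype.card (Idx n k)) * (√(2 ^ n) * ‖b‖) := by ring
    _ ≤ _ := by gcongr; exact sqrt_two_pow_mul_norm_le_l2norm_constForm b

lemma l2norm_kappaDelta_constForm_le {n k : ℕ} (a : Idx n k → ℝ) :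
    l2norm n (k+1) (kappaDelta n k (constForm n k a))
      ≤ n * √(Fintype.card (Idx n (k+1))) * l2norm n k (constForm n k a) := by
  calc _ ≤ √(Fintype.card (Idx n (k+1))) * (√(2 ^ n) * (n * ‖a‖)) :=
        l2norm_le_of_abs_eval_le (by positivity) fun s _ hx =>
          abs_eval_kappaDelta_constForm_le a s hx
    _ = n * √(Fintype.card (Idx n (k+1))) * (√(2 ^ n) * ‖a‖) := by ring
    _ ≤ _ := by gcongr; exact sqrt_two_pow_mul_norm_le_l2norm_constForm a

/-- The pairing `⟨d ν, μ⟩ - ⟨ν, δ μ⟩` defining the adjoint projection. -/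
noncomputable def adjointPairing (n k : ℕ) (ν : Form n k) (μ : Form n (k+1)) : ℝ :=
  finner n (k+1) (extd n k ν) μ - finner n k ν (codiff n k μ)

lemma adjointPairing_sub_left {n k : ℕ} (ν ν' : Form n k) (μ : Form n (k+1)) :
    adjointPairing n k (ν - ν') μ = adjointPairing n k ν μ - adjointPairing n k ν' μ := by
  simp only [adjointPairing, map_sub, finner_sub_left]
  ring

section Stability

variable {n k : ℕ} {a : Idx n k → ℝ} {b : Idx n (k+1) → ℝ} {Δ : Form n k}

lemma mul_l2norm_constForm_le_hnorm
    (h : adjointPairing n k (constForm n k a + koszul n k (constForm n (k+1) b))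
      (constForm n (k+1) b) = adjointPairing n k Δ (constForm n (k+1) b)) :
    ((k : ℝ) + 1) * l2norm n (k+1) (constForm n (k+1) b) ≤ hnorm n k Δ := by
  set v := l2norm n (k+1) (constForm n (k+1) b)
  have hv : finner n (k+1) (constForm n (k+1) b) (constForm n (k+1) b) = v ^ 2 :=
    (Real.sq_sqrt (finner_self_nonneg _)).symm
  simp only [adjointPairing, map_add, extd_constForm, extd_koszul_constForm, codiff_constForm,
    zero_add, finner_smul_left, finner_zero_right, sub_zero, hv] at h
  have hbound : ((k : ℝ) + 1) * v ^ 2 ≤ hnorm n k Δ * v :=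
    h ▸ (le_abs_self _).trans ((abs_finner_le _ _).trans
      (mul_le_mul_of_nonneg_right (l2norm_extd_le_hnorm Δ) (apply_nonneg _ _)))
  refine le_of_sq_le_mul (Real.sqrt_nonneg _) ?_
  calc (((k : ℝ) + 1) * v) ^ 2 = ((k : ℝ) + 1) * (((k : ℝ) + 1) * v ^ 2) := by ring
    _ ≤ ((k : ℝ) + 1) * (hnorm n k Δ * v) := by gcongr
    _ = ((k : ℝ) + 1) * v * hnorm n k Δ := by ring

/-- Since `δ κ^δ a = -(n - k) a` with `n - k ≥ 1`, testing against `κ^δ a` is coercive in `a`. -/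
lemma l2norm_constForm_le_hnorm (hk : k + 1 ≤ n) {Dδ Dκ : ℝ} (hDδ : 0 ≤ Dδ) (hDκ : 0 ≤ Dκ)
    (hδ : l2norm n (k+1) (kappaDelta n k (constForm n k a)) ≤ Dδ * l2norm n k (constForm n k a))
    (hκ : l2norm n k (koszul n k (constForm n (k+1) b))
      ≤ Dκ * l2norm n (k+1) (constForm n (k+1) b))
    (h : adjointPairing n k (constForm n k a + koszul n k (constForm n (k+1) b))
      (kappaDelta n k (constForm n k a))
        = adjointPairing n k Δ (kappaDelta n k (constForm n k a)))
    (hb : ((k : ℝ) + 1) * l2norm n (k+1) (constForm n (k+1) b) ≤ hnorm n k Δ) :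
    l2norm n k (constForm n k a) ≤ (1 + 2 * Dδ + Dκ) * hnorm n k Δ := by
  simp only [adjointPairing, map_add, extd_constForm, extd_koszul_constForm, zero_add,
    codiff_kappaDelta_constForm, finner_smul_left, finner_smul_right, finner_add_left] at h
  set ca := constForm n k a
  set cb := constForm n (k+1) b
  set μ := kappaDelta n k ca
  set u := l2norm n k ca
  set v := l2norm n (k+1) cb
  set H := hnorm n k Δ
  set m : ℝ := n - k
  have hm : 1 ≤ m := by
    have : ((k + 1 : ℕ) : ℝ) ≤ n := by exact_mod_cast hk
    push_cast at this
    linarith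
  have hu : finner n k ca ca = u ^ 2 := (Real.sq_sqrt (finner_self_nonneg _)).symm
  have hH : 0 ≤ H := Real.sqrt_nonneg _
  have hvH : v ≤ H := le_of_natCast_add_one_mul_le (apply_nonneg _ _) hb
  have hidentity : m * u ^ 2 = finner n (k+1) (extd n k Δ) μ + m * finner n k Δ ca
      - ((k : ℝ) + 1) * finner n (k+1) cb μ - m * finner n k (koszul n k cb) ca := by
    rw [hu] at h
    linear_combination h
  have h1 : finner n (k+1) (extd n k Δ) μ ≤ H * (Dδ * u) :=
    (le_abs_self _).trans ((abs_finner_le _ _).trans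
      (mul_le_mul (l2norm_extd_le_hnorm Δ) hδ (apply_nonneg _ _) hH))
  have h2 : finner n k Δ ca ≤ H * u :=
    (le_abs_self _).trans ((abs_finner_le _ _).trans
      (mul_le_mul_of_nonneg_right (l2norm_le_hnorm Δ) (apply_nonneg _ _)))
  have h3 : -(((k : ℝ) + 1) * finner n (k+1) cb μ) ≤ H * (Dδ * u) := by
    have hDu : 0 ≤ Dδ * u := (apply_nonneg _ _).trans hδ
    calc -(((k : ℝ) + 1) * finner n (k+1) cb μ) ≤ ((k : ℝ) + 1) * (v * (Dδ * u)) := by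
          rw [← mul_neg]
          exact mul_le_mul_of_nonneg_left ((neg_le_abs _).trans ((abs_finner_le _ _).trans
            (mul_le_mul_of_nonneg_left hδ (apply_nonneg _ _)))) (by positivity)
      _ = ((k : ℝ) + 1) * v * (Dδ * u) := by ring
      _ ≤ H * (Dδ * u) := mul_le_mul_of_nonneg_right hb hDu
  have h4 : -finner n k (koszul n k cb) ca ≤ Dκ * H * u :=
    (neg_le_abs _).trans ((abs_finner_le _ _).trans (mul_le_mul_of_nonneg_right
      (hκ.trans (mul_le_mul_of_nonneg_left hvH hDκ)) (apply_nonneg _ _)))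
  have hsq : m * u ^ 2 ≤ m * (u * ((1 + 2 * Dδ + Dκ) * H)) := by
    have : 0 ≤ H * (Dδ * u) := by positivity
    nlinarith
  exact le_of_sq_le_mul (by positivity) (le_of_mul_le_mul_left hsq (by linarith))

end Stability

theorem exists_hnorm_le_of_adjointPairing_eq {n k : ℕ} (hk : k + 1 ≤ n) :
    ∃ C : ℝ, 0 ≤ C ∧ ∀ ρ ∈ Pm n k, ∀ Δ : Form n k,
      (∀ μ ∈ PsS n k, adjointPairing n k ρ μ = adjointPairing n k Δ μ) →
        hnorm n k ρ ≤ C * hnorm n k Δ := by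
  set Dδ : ℝ := n * √(Fintype.card (Idx n (k+1)))
  set Dκ : ℝ := n * √(Fintype.card (Idx n k))
  refine ⟨2 + 2 * Dδ + 2 * Dκ, by positivity, fun ρ hρ Δ hadj => ?_⟩
  obtain ⟨a, b, rfl⟩ := exists_eq_constForm_add_koszul_of_mem_Pm hρ
  have hb := mul_l2norm_constForm_le_hnorm (hadj _ (constForm_mem_PsS b))
  have ha := l2norm_constForm_le_hnorm hk (by positivity) (by positivity)
    (l2norm_kappaDelta_constForm_le a) (l2norm_koszul_constForm_le b)
    (hadj _ (kappaDelta_constForm_mem_PsS a)) hb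
  have hvH : l2norm n (k+1) (constForm n (k+1) b) ≤ hnorm n k Δ :=
    le_of_natCast_add_one_mul_le (apply_nonneg _ _) hb
  calc hnorm n k (constForm n k a + koszul n k (constForm n (k+1) b))
      ≤ l2norm n k (constForm n k a) + l2norm n k (koszul n k (constForm n (k+1) b))
        + ((k : ℝ) + 1) * l2norm n (k+1) (constForm n (k+1) b) := by
        refine (hnorm_le_l2norm_add_l2norm_extd _).trans (add_le_add (map_add_le_add _ _ _) ?_)
        rw [map_add, extd_constForm, zero_add, extd_koszul_constForm, map_smul_eq_mul,
          Real.norm_of_nonneg (by positivity)]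
    _ ≤ (1 + 2 * Dδ + Dκ) * hnorm n k Δ + Dκ * hnorm n k Δ + hnorm n k Δ := by
        gcongr
        exact (l2norm_koszul_constForm_le b).trans (by gcongr)
    _ ≤ (2 + 2 * Dδ + 2 * Dκ) * hnorm n k Δ := by nlinarith

/-- Lemma 2.2, quasi-optimality. Let `I` be the adjoint projection onto
`P_1^-Λ^k` on the cube `K = [-1,1]ⁿ`. There is a constant `C = C(k,n,K) > 0` such that
`‖ω - I ω‖_{HΛ^k(K)} ≤ C · inf_{η ∈ P_1^-Λ^k(K)} ‖ω - η‖_{HΛ^k(K)}` for all `ω`. -/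
theorem stmt12 (n k : ℕ) (hk : k + 1 ≤ n)
    (I : Form n k → Form n k)
    (hI : ∀ ω : Form n k, I ω ∈ Pm n k ∧ ∀ μ ∈ PsS n k,
      finner n (k+1) (extd n k (I ω)) μ - finner n k (I ω) (codiff n k μ)
        = finner n (k+1) (extd n k ω) μ - finner n k ω (codiff n k μ)) :
    ∃ C : ℝ, 0 < C ∧ ∀ ω : Form n k, ∀ η ∈ Pm n k,
      hnorm n k (ω - I ω) ≤ C * hnorm n k (ω - η) := by
  obtain ⟨C, hC, hstable⟩ := exists_hnorm_le_of_adjointPairing_eq hk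
  refine ⟨1 + C, by positivity, fun ω η hη => ?_⟩
  have hadj : ∀ μ ∈ PsS n k,
      adjointPairing n k (I ω - η) μ = adjointPairing n k (ω - η) μ := fun μ hμ => by
    rw [adjointPairing_sub_left, adjointPairing_sub_left]
    exact congrArg (· - _) ((hI ω).2 μ hμ)
  calc hnorm n k (ω - I ω) = hSeminorm n k ((ω - η) - (I ω - η)) := by
        rw [sub_sub_sub_cancel_right, hSeminorm_apply]
    _ ≤ hSeminorm n k (ω - η) + hSeminorm n k (I ω - η) := map_sub_le_add _ _ _
    _ = hnorm n k (ω - η) + hnorm n k (I ω - η) := by rw [hSeminorm_apply, hSeminorm_apply]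
    _ ≤ hnorm n k (ω - η) + C * hnorm n k (ω - η) := by
        gcongr
        exact hstable _ (sub_mem (hI ω).1 hη) _ hadj
    _ = (1 + C) * hnorm n k (ω - η) := by ring
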